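/- Let f₁, f₂ : [0,∞)×[0,∞) → [0,∞) be continuous, k₁ the Dirichlet Green's function, k₂(t,s) = min{t,s}, K̃₁ = {w ∈ C[0,1] : w ≥ 0, min_{t∈[1/4,3/4]} w(t) ≥ (1/4)‖w‖_∞}, K̃₂ = {w ∈ C[0,1] : w ≥ 0, min_{t∈[1/2,1]} w(t) ≥ (1/2)‖w‖_∞}, and K = K̃₁ × K̃₂. Suppose there exists ρ > 0 such that sup{ f₁(u,v)/ρ : (u,v) ∈ [0,ρ]² } < 8 and sup{ f₂(u,v)/ρ : (u,v) ∈ [0,ρ]² } < 2. Then for every (u,v) ∈ K with max{‖u‖_∞, ‖v‖_∞} = ρ and every μ ≥ 1, one has (μu, μv) ≠ (T₁(u,v), T₂(u,v)), where T₁(u,v)(t) = ∫₀¹ k₁(t,s) f₁(u(s),v(s)) ds and T₂(u,v)(t) = ∫₀¹ k₂(t,s) f₂(u(s),v(s)) ds. -/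

import Mathlib

open Set MeasureTheory

/-- The Green's function of the Dirichlet problem:
`k₁(t,s) = s(1-t)` if `s ≤ t`, `k₁(t,s) = t(1-s)` if `s > t`. -/
noncomputable def k1 (t s : ℝ) : ℝ := if s ≤ t then s * (1 - t) else t * (1 - s)

/-- The Green's function of the Robin problem: `k₂(t,s) = min{t,s}`. -/
noncomputable def k2 (t s : ℝ) : ℝ := min t s

/-- The supremum norm `‖w‖_∞ = max_{t ∈ [0,1]} |w(t)|`. -/
noncomputable def supNorm (w : ℝ → ℝ) : ℝ := sSup ((fun t => |w t|) '' Icc (0:ℝ) 1)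

/-- Membership in `K̃₁ = {w ∈ C[0,1] : w ≥ 0, min_{t∈[1/4,3/4]} w(t) ≥ (1/4)‖w‖_∞}`. -/
def inConeK1 (w : ℝ → ℝ) : Prop :=
  ContinuousOn w (Icc 0 1) ∧ (∀ t ∈ Icc (0:ℝ) 1, 0 ≤ w t) ∧
    (1/4 : ℝ) * supNorm w ≤ sInf (w '' Icc (1/4 : ℝ) (3/4))

/-- Membership in `K̃₂ = {w ∈ C[0,1] : w ≥ 0, min_{t∈[1/2,1]} w(t) ≥ (1/2)‖w‖_∞}`. -/
def inConeK2 (w : ℝ → ℝ) : Prop :=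
  ContinuousOn w (Icc 0 1) ∧ (∀ t ∈ Icc (0:ℝ) 1, 0 ≤ w t) ∧
    (1/2 : ℝ) * supNorm w ≤ sInf (w '' Icc (1/2 : ℝ) 1)

lemma k1_eq_min (t s : ℝ) : k1 t s = min (s * (1 - t)) (t * (1 - s)) := by
  unfold k1; split_ifs with h
  · exact (min_eq_left (by nlinarith)).symm
  · exact (min_eq_right (by nlinarith)).symm

lemma k1_cont (t : ℝ) : Continuous (k1 t) := by
  have : k1 t = fun s => min (s * (1 - t)) (t * (1 - s)) := funext (k1_eq_min t)
  rw [this]; continuity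

lemma k2_cont (t : ℝ) : Continuous (k2 t) := by
  unfold k2; exact continuous_const.min continuous_id

lemma k1_nonneg {t s : ℝ} (ht : t ∈ Icc (0:ℝ) 1) (hs : s ∈ Icc (0:ℝ) 1) : 0 ≤ k1 t s := by
  rw [k1_eq_min]
  exact le_min (mul_nonneg hs.1 (by linarith [ht.2])) (mul_nonneg ht.1 (by linarith [hs.2]))

lemma k2_nonneg {t s : ℝ} (ht : t ∈ Icc (0:ℝ) 1) (hs : s ∈ Icc (0:ℝ) 1) : 0 ≤ k2 t s :=
  le_min ht.1 hs.1

lemma int_k1 (t : ℝ) (ht : t ∈ Icc (0:ℝ) 1) : ∫ s in (0:ℝ)..1, k1 t s = t * (1 - t) / 2 := by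
  have i1 : IntervalIntegrable (k1 t) volume 0 t := (k1_cont t).intervalIntegrable _ _
  have i2 : IntervalIntegrable (k1 t) volume t 1 := (k1_cont t).intervalIntegrable _ _
  rw [← intervalIntegral.integral_add_adjacent_intervals i1 i2]
  have h1 : (∫ s in (0:ℝ)..t, k1 t s) = ∫ s in (0:ℝ)..t, s * (1 - t) := by
    apply intervalIntegral.integral_congr
    intro s hs
    rw [uIcc_of_le ht.1] at hs
    simp [k1, hs.2]
  have h2 : (∫ s in t..(1:ℝ), k1 t s) = ∫ s in t..(1:ℝ), t * (1 - s) := by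
    apply intervalIntegral.integral_congr
    intro s hs
    rw [uIcc_of_le ht.2] at hs
    rw [k1_eq_min]
    exact min_eq_right (by nlinarith [hs.1])
  rw [h1, h2]
  rw [intervalIntegral.integral_mul_const]
  have : (∫ s in t..(1:ℝ), t * (1 - s)) = t * ∫ s in t..(1:ℝ), (1 - s) := by
    rw [intervalIntegral.integral_const_mul]
  rw [this]
  have h3 : (∫ s in t..(1:ℝ), (1 - s)) = (1 - t)^2 / 2 := by
    have : (∫ s in t..(1:ℝ), (1 - s)) = (∫ s in t..(1:ℝ), (1:ℝ)) - ∫ s in t..(1:ℝ), s := by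
      rw [← intervalIntegral.integral_sub intervalIntegrable_const
        intervalIntegral.intervalIntegrable_id]
    rw [this]; simp [integral_id]; ring
  rw [h3, integral_id]; ring

lemma int_k2 (t : ℝ) (ht : t ∈ Icc (0:ℝ) 1) : ∫ s in (0:ℝ)..1, k2 t s = t - t^2 / 2 := by
  have i1 : IntervalIntegrable (k2 t) volume 0 t := (k2_cont t).intervalIntegrable _ _
  have i2 : IntervalIntegrable (k2 t) volume t 1 := (k2_cont t).intervalIntegrable _ _
  rw [← intervalIntegral.integral_add_adjacent_intervals i1 i2]
  have h1 : (∫ s in (0:ℝ)..t, k2 t s) = ∫ s in (0:ℝ)..t, s := by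
    apply intervalIntegral.integral_congr
    intro s hs
    rw [uIcc_of_le ht.1] at hs
    exact min_eq_right hs.2
  have h2 : (∫ s in t..(1:ℝ), k2 t s) = ∫ s in t..(1:ℝ), t := by
    apply intervalIntegral.integral_congr
    intro s hs
    rw [uIcc_of_le ht.2] at hs
    exact min_eq_left hs.1
  rw [h1, h2, integral_id]; simp; ring

lemma key_int_le (k g : ℝ → ℝ) (hk : Continuous k) (hknn : ∀ s ∈ Icc (0:ℝ) 1, 0 ≤ k s)
    (hg : ContinuousOn g (Icc 0 1)) (C : ℝ) (hgC : ∀ s ∈ Icc (0:ℝ) 1, g s ≤ C) :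
    (∫ s in (0:ℝ)..1, k s * g s) ≤ (∫ s in (0:ℝ)..1, k s) * C := by
  have hIcc : uIcc (0:ℝ) 1 = Icc 0 1 := uIcc_of_le zero_le_one
  have ikg : IntervalIntegrable (fun s => k s * g s) volume 0 1 := by
    apply ContinuousOn.intervalIntegrable
    rw [hIcc]
    exact (hk.continuousOn).mul hg
  have ikC : IntervalIntegrable (fun s => k s * C) volume 0 1 := by
    apply ContinuousOn.intervalIntegrable
    rw [hIcc]
    exact (hk.continuousOn).mul continuousOn_const
  calc (∫ s in (0:ℝ)..1, k s * g s) ≤ ∫ s in (0:ℝ)..1, k s * C := by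
        apply intervalIntegral.integral_mono_on zero_le_one ikg ikC
        intro s hs
        exact mul_le_mul_of_nonneg_left (hgC s hs) (hknn s hs)
    _ = (∫ s in (0:ℝ)..1, k s) * C := intervalIntegral.integral_mul_const _ _

/-- Index-one lemma for the system: if there is `ρ > 0` with
`sup{f₁(u,v)/ρ : (u,v) ∈ [0,ρ]²} < 8` and `sup{f₂(u,v)/ρ : (u,v) ∈ [0,ρ]²} < 2`,
then `μ(u,v) ≠ T(u,v)` for every `(u,v) ∈ K` with `‖(u,v)‖ = ρ` and every `μ ≥ 1`. -/
theorem stmt_19 (f₁ f₂ : ℝ → ℝ → ℝ)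
    (hf₁ : ContinuousOn (fun p : ℝ × ℝ => f₁ p.1 p.2) (Ici 0 ×ˢ Ici 0))
    (hf₂ : ContinuousOn (fun p : ℝ × ℝ => f₂ p.1 p.2) (Ici 0 ×ˢ Ici 0))
    (hf₁pos : ∀ x ∈ Ici (0:ℝ), ∀ y ∈ Ici (0:ℝ), 0 ≤ f₁ x y)
    (hf₂pos : ∀ x ∈ Ici (0:ℝ), ∀ y ∈ Ici (0:ℝ), 0 ≤ f₂ x y)
    (ρ : ℝ) (hρ : 0 < ρ)
    (hsup₁ : sSup ((fun p : ℝ × ℝ => f₁ p.1 p.2 / ρ) '' (Icc (0:ℝ) ρ ×ˢ Icc (0:ℝ) ρ)) < 8)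
    (hsup₂ : sSup ((fun p : ℝ × ℝ => f₂ p.1 p.2 / ρ) '' (Icc (0:ℝ) ρ ×ˢ Icc (0:ℝ) ρ)) < 2) :
    ∀ u v : ℝ → ℝ, inConeK1 u → inConeK2 v →
      max (supNorm u) (supNorm v) = ρ →
      ∀ μ : ℝ, 1 ≤ μ →
        ¬ ((∀ t ∈ Icc (0:ℝ) 1, μ * u t = ∫ s in (0:ℝ)..1, k1 t s * f₁ (u s) (v s)) ∧
           (∀ t ∈ Icc (0:ℝ) 1, μ * v t = ∫ s in (0:ℝ)..1, k2 t s * f₂ (u s) (v s))) := by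
  intro u v hu hv hmax μ hμ
  rintro ⟨h1, h2⟩
  -- basics
  have h01 : (0:ℝ) ∈ Icc (0:ℝ) 1 := ⟨le_refl 0, zero_le_one⟩
  have hKcpt : IsCompact (Icc (0:ℝ) ρ ×ˢ Icc (0:ℝ) ρ) := isCompact_Icc.prod isCompact_Icc
  have hsub : (Icc (0:ℝ) ρ ×ˢ Icc (0:ℝ) ρ) ⊆ (Ici (0:ℝ) ×ˢ Ici (0:ℝ)) := by
    rintro ⟨x, y⟩ ⟨hx, hy⟩; exact ⟨hx.1, hy.1⟩
  have hbdd₁ : BddAbove ((fun p : ℝ × ℝ => f₁ p.1 p.2 / ρ) '' (Icc (0:ℝ) ρ ×ˢ Icc (0:ℝ) ρ)) :=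
    (hKcpt.image_of_continuousOn ((hf₁.mono hsub).div_const ρ)).bddAbove
  have hbdd₂ : BddAbove ((fun p : ℝ × ℝ => f₂ p.1 p.2 / ρ) '' (Icc (0:ℝ) ρ ×ˢ Icc (0:ℝ) ρ)) :=
    (hKcpt.image_of_continuousOn ((hf₂.mono hsub).div_const ρ)).bddAbove
  -- bounds on u, v: 0 ≤ u s ≤ ρ
  have hsupu : supNorm u ≤ ρ := hmax ▸ le_max_left _ _
  have hsupv : supNorm v ≤ ρ := hmax ▸ le_max_right _ _
  have habs : ∀ w : ℝ → ℝ, ContinuousOn w (Icc 0 1) → ∀ s ∈ Icc (0:ℝ) 1, |w s| ≤ supNorm w := by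
    intro w hw s hs
    apply le_csSup
    · exact (isCompact_Icc.image_of_continuousOn hw.abs).bddAbove
    · exact ⟨s, hs, rfl⟩
  have hu_mem : ∀ s ∈ Icc (0:ℝ) 1, u s ∈ Icc (0:ℝ) ρ := fun s hs =>
    ⟨hu.2.1 s hs, le_trans (le_trans (le_abs_self _) (habs u hu.1 s hs)) hsupu⟩
  have hv_mem : ∀ s ∈ Icc (0:ℝ) 1, v s ∈ Icc (0:ℝ) ρ := fun s hs =>
    ⟨hv.2.1 s hs, le_trans (le_trans (le_abs_self _) (habs v hv.1 s hs)) hsupv⟩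
  -- sSup values
  set M₁ := sSup ((fun p : ℝ × ℝ => f₁ p.1 p.2 / ρ) '' (Icc (0:ℝ) ρ ×ˢ Icc (0:ℝ) ρ))
  set M₂ := sSup ((fun p : ℝ × ℝ => f₂ p.1 p.2 / ρ) '' (Icc (0:ℝ) ρ ×ˢ Icc (0:ℝ) ρ))
  have h00 : ((0:ℝ), (0:ℝ)) ∈ Icc (0:ℝ) ρ ×ˢ Icc (0:ℝ) ρ :=
    ⟨⟨le_refl 0, hρ.le⟩, ⟨le_refl 0, hρ.le⟩⟩
  have hM₁nn : 0 ≤ M₁ :=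
    le_trans (div_nonneg (hf₁pos 0 self_mem_Ici 0 self_mem_Ici) hρ.le)
      (le_csSup hbdd₁ ⟨(0, 0), h00, rfl⟩)
  have hM₂nn : 0 ≤ M₂ :=
    le_trans (div_nonneg (hf₂pos 0 self_mem_Ici 0 self_mem_Ici) hρ.le)
      (le_csSup hbdd₂ ⟨(0, 0), h00, rfl⟩)
  have hfb₁ : ∀ s ∈ Icc (0:ℝ) 1, f₁ (u s) (v s) ≤ M₁ * ρ := by
    intro s hs
    have : f₁ (u s) (v s) / ρ ≤ M₁ :=
      le_csSup hbdd₁ ⟨(u s, v s), ⟨hu_mem s hs, hv_mem s hs⟩, rfl⟩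
    calc f₁ (u s) (v s) = f₁ (u s) (v s) / ρ * ρ := by field_simp
      _ ≤ M₁ * ρ := mul_le_mul_of_nonneg_right this hρ.le
  have hfb₂ : ∀ s ∈ Icc (0:ℝ) 1, f₂ (u s) (v s) ≤ M₂ * ρ := by
    intro s hs
    have : f₂ (u s) (v s) / ρ ≤ M₂ :=
      le_csSup hbdd₂ ⟨(u s, v s), ⟨hu_mem s hs, hv_mem s hs⟩, rfl⟩
    calc f₂ (u s) (v s) = f₂ (u s) (v s) / ρ * ρ := by field_simp
      _ ≤ M₂ * ρ := mul_le_mul_of_nonneg_right this hρ.le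
  -- continuity of s ↦ fᵢ (u s) (v s)
  have hmapsTo : MapsTo (fun s => (u s, v s)) (Icc (0:ℝ) 1) (Ici (0:ℝ) ×ˢ Ici (0:ℝ)) :=
    fun s hs => ⟨hu.2.1 s hs, hv.2.1 s hs⟩
  have hg₁ : ContinuousOn (fun s => f₁ (u s) (v s)) (Icc (0:ℝ) 1) :=
    hf₁.comp (hu.1.prodMk hv.1) hmapsTo
  have hg₂ : ContinuousOn (fun s => f₂ (u s) (v s)) (Icc (0:ℝ) 1) :=
    hf₂.comp (hu.1.prodMk hv.1) hmapsTo
  -- pointwise estimate for u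
  have hub : ∀ t ∈ Icc (0:ℝ) 1, u t ≤ M₁ * ρ / 8 := by
    intro t ht
    have h0 : 0 ≤ u t := hu.2.1 t ht
    have hle : μ * u t ≤ M₁ * ρ / 8 := by
      rw [h1 t ht]
      calc (∫ s in (0:ℝ)..1, k1 t s * f₁ (u s) (v s))
          ≤ (∫ s in (0:ℝ)..1, k1 t s) * (M₁ * ρ) :=
            key_int_le (k1 t) _ (k1_cont t) (fun s hs => k1_nonneg ht hs) hg₁ _ hfb₁
        _ = t * (1 - t) / 2 * (M₁ * ρ) := by rw [int_k1 t ht]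
        _ ≤ M₁ * ρ / 8 := by
            have hMρ : 0 ≤ M₁ * ρ := mul_nonneg hM₁nn hρ.le
            nlinarith [sq_nonneg (t - 1/2)]
    nlinarith
  have hvb : ∀ t ∈ Icc (0:ℝ) 1, v t ≤ M₂ * ρ / 2 := by
    intro t ht
    have h0 : 0 ≤ v t := hv.2.1 t ht
    have hle : μ * v t ≤ M₂ * ρ / 2 := by
      rw [h2 t ht]
      calc (∫ s in (0:ℝ)..1, k2 t s * f₂ (u s) (v s))
          ≤ (∫ s in (0:ℝ)..1, k2 t s) * (M₂ * ρ) :=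
            key_int_le (k2 t) _ (k2_cont t) (fun s hs => k2_nonneg ht hs) hg₂ _ hfb₂
        _ = (t - t^2 / 2) * (M₂ * ρ) := by rw [int_k2 t ht]
        _ ≤ M₂ * ρ / 2 := by
            have hMρ : 0 ≤ M₂ * ρ := mul_nonneg hM₂nn hρ.le
            nlinarith [sq_nonneg (t - 1), ht.1, ht.2]
    nlinarith
  -- sup norm bounds
  have hsu : supNorm u ≤ M₁ * ρ / 8 := by
    unfold supNorm
    refine csSup_le ⟨|u 0|, ⟨0, h01, rfl⟩⟩ ?_
    rintro x ⟨t, ht, rfl⟩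
    show |u t| ≤ _
    rw [abs_of_nonneg (hu.2.1 t ht)]
    exact hub t ht
  have hsv : supNorm v ≤ M₂ * ρ / 2 := by
    unfold supNorm
    refine csSup_le ⟨|v 0|, ⟨0, h01, rfl⟩⟩ ?_
    rintro x ⟨t, ht, rfl⟩
    show |v t| ≤ _
    rw [abs_of_nonneg (hv.2.1 t ht)]
    exact hvb t ht
  have hlt₁ : M₁ * ρ / 8 < ρ := by nlinarith
  have hlt₂ : M₂ * ρ / 2 < ρ := by nlinarith
  have : ρ < ρ := by
    calc ρ = max (supNorm u) (supNorm v) := hmax.symm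
      _ < ρ := max_lt (lt_of_le_of_lt hsu hlt₁) (lt_of_le_of_lt hsv hlt₂)
  exact absurd this (lt_irrefl ρ)
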